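/- arXiv:1006.5813 — 3 statements merged into one kernel-verified Lean document; each statement's English description precedes it below -/
import Mathlib

section
/- For the Euler form ⟨α,β⟩ = Σ_{x ∈ Q_0} α(x)β(x) - Σ_{a ∈ Q_1} α(ta)β(ha) of a finite quiver Q, and any representations V, W of Q over a field K, one has dim Hom_Q(V,W) - dim Ext¹_Q(V,W) = ⟨dim V, dim W⟩, where dim V denotes the dimension vector. Equivalently, the canonical four-term sequence 0 → Hom_Q(V,W) → ⊕_x Hom(V(x),W(x)) → ⊕_a Hom(V(ta),W(ha)) → Ext_Q(V,W) → 0 is exact. -/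
open Matrix

/-- The map `d_V^W : ⊕_x Hom(V(x), W(x)) → ⊕_a Hom(V(ta), W(ha))`,
`(φ(x))_x ↦ (W(a) φ(ta) - φ(ha) V(a))_a`, for matrix representations `V`, `W` of a
finite quiver with arrow set `A`, tails `ta`, heads `ha`, and dimension vectors
`α` (for `V`) and `β` (for `W`). -/
noncomputable def dmap {K : Type*} [Field K] {n : ℕ} {A : Type*}
    (ta ha : A → Fin n) (α β : Fin n → ℕ)
    (V : ∀ a : A, Matrix (Fin (α (ha a))) (Fin (α (ta a))) K)
    (W : ∀ a : A, Matrix (Fin (β (ha a))) (Fin (β (ta a))) K) :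
    (∀ x : Fin n, Matrix (Fin (β x)) (Fin (α x)) K) →ₗ[K]
      (∀ a : A, Matrix (Fin (β (ha a))) (Fin (α (ta a))) K) where
  toFun φ := fun a => W a * φ (ta a) - φ (ha a) * V a
  map_add' φ ψ := by
    funext a
    simp [Matrix.mul_add, Matrix.add_mul]
    abel
  map_smul' c φ := by
    funext a
    simp [Matrix.mul_smul, Matrix.smul_mul, smul_sub]

/-- Euler form identity: for representations `V`, `W` of a finite quiver `Q`,
`dim Hom_Q(V, W) - dim Ext_Q(V, W) = ⟨dim V, dim W⟩`, where
`Hom_Q(V, W) = ker d_V^W` and `Ext_Q(V, W) = coker d_V^W` (equivalently, the canonical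
four-term sequence is exact). -/
theorem euler_form_identity {K : Type*} [Field K] {n : ℕ} {A : Type*} [Fintype A]
    (ta ha : A → Fin n) (α β : Fin n → ℕ)
    (V : ∀ a : A, Matrix (Fin (α (ha a))) (Fin (α (ta a))) K)
    (W : ∀ a : A, Matrix (Fin (β (ha a))) (Fin (β (ta a))) K) :
    (Module.finrank K (LinearMap.ker (dmap ta ha α β V W)) : ℤ) -
        (Module.finrank K
          ((∀ a : A, Matrix (Fin (β (ha a))) (Fin (α (ta a))) K) ⧸
            LinearMap.range (dmap ta ha α β V W)) : ℤ) =
      (∑ x : Fin n, (α x : ℤ) * (β x : ℤ)) -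
        ∑ a : A, (α (ta a) : ℤ) * (β (ha a) : ℤ) := by
  set f := dmap ta ha α β V W
  have h1 : Module.finrank K ↥(LinearMap.range f) + Module.finrank K ↥(LinearMap.ker f) =
      Module.finrank K (∀ x : Fin n, Matrix (Fin (β x)) (Fin (α x)) K) :=
    LinearMap.finrank_range_add_finrank_ker f
  have h2 : Module.finrank K
        ((∀ a : A, Matrix (Fin (β (ha a))) (Fin (α (ta a))) K) ⧸ LinearMap.range f) +
      Module.finrank K ↥(LinearMap.range f) =
      Module.finrank K (∀ a : A, Matrix (Fin (β (ha a))) (Fin (α (ta a))) K) :=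
    Submodule.finrank_quotient_add_finrank _
  have hd : Module.finrank K (∀ x : Fin n, Matrix (Fin (β x)) (Fin (α x)) K) =
      ∑ x : Fin n, α x * β x := by
    rw [Module.finrank_pi_fintype]
    congr 1; funext x
    simp [Module.finrank_matrix, Nat.mul_comm]
  have hc : Module.finrank K (∀ a : A, Matrix (Fin (β (ha a))) (Fin (α (ta a))) K) =
      ∑ a : A, α (ta a) * β (ha a) := by
    rw [Module.finrank_pi_fintype]
    congr 1; funext a
    simp [Module.finrank_matrix, Nat.mul_comm]
  rw [hd] at h1
  rw [hc] at h2
  have h1' : ((Module.finrank K ↥(LinearMap.range f) : ℤ)) +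
      (Module.finrank K ↥(LinearMap.ker f) : ℤ) = ∑ x : Fin n, (α x : ℤ) * (β x : ℤ) := by
    exact_mod_cast congrArg (Nat.cast : ℕ → ℤ) h1
  have h2' : (Module.finrank K
        ((∀ a : A, Matrix (Fin (β (ha a))) (Fin (α (ta a))) K) ⧸ LinearMap.range f) : ℤ) +
      (Module.finrank K ↥(LinearMap.range f) : ℤ) =
      ∑ a : A, (α (ta a) : ℤ) * (β (ha a) : ℤ) := by
    exact_mod_cast congrArg (Nat.cast : ℕ → ℤ) h2
  linarith
end

section
/- Suppose a group G acts linearly on a finite-dimensional vector space over an algebraically closed field K of characteristic 0, with a dense orbit in the corresponding affine space. Then for every character χ of G, the space of semi-invariants of weight χ, {f ∈ K[V] : g·f = χ(g)f}, has dimension at most 1. -/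
open MvPolynomial

/-- Sato–Kimura: if a group `G` acts linearly (via `ρ`) on `V = K^n` with a dense
orbit (here: a point `v₀` such that any polynomial vanishing on its orbit is zero),
then for every character `χ` of `G` the space of semi-invariants of weight `χ`,
`{f ∈ K[V] : g·f = χ(g) f}` where `(g·f)(v) = f(ρ(g)⁻¹ v)`, has dimension at most 1. -/
theorem sato_kimura_semiinvariants_dim_le_one {K : Type*} [Field K] [IsAlgClosed K]
    [CharZero K] (n : ℕ) (G : Type*) [Group G]
    (ρ : G →* ((Fin n → K) ≃ₗ[K] (Fin n → K))) (χ : G →* Kˣ) (v₀ : Fin n → K)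
    (hdense : ∀ f : MvPolynomial (Fin n) K,
      (∀ g : G, eval (ρ g v₀) f = 0) → f = 0) :
    Module.rank K
        (Submodule.span K
          {f : MvPolynomial (Fin n) K |
            ∀ (g : G) (v : Fin n → K), eval ((ρ g)⁻¹ v) f = (χ g : K) * eval v f}) ≤ 1 := by
  set S := {f : MvPolynomial (Fin n) K |
      ∀ (g : G) (v : Fin n → K), eval ((ρ g)⁻¹ v) f = (χ g : K) * eval v f} with hS
  -- key evaluation identity on the orbit
  have key : ∀ f ∈ S, ∀ g : G,
      eval (ρ g v₀) f = (χ g : K)⁻¹ * eval v₀ f := by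
    intro f hf g
    have h := hf g⁻¹ v₀
    rw [map_inv, inv_inv] at h
    rw [h, map_inv]
    simp
  by_cases hex : ∃ f₀, f₀ ∈ S ∧ f₀ ≠ 0
  · obtain ⟨f₀, hf₀S, hf₀⟩ := hex
    have hval : eval v₀ f₀ ≠ 0 := by
      intro h0
      apply hf₀
      apply hdense
      intro g
      rw [key f₀ hf₀S g, h0, mul_zero]
    have hsub : S ⊆ (Submodule.span K {f₀} : Submodule K (MvPolynomial (Fin n) K)) := by
      intro f hf
      have hzero : (eval v₀ f₀) • f - (eval v₀ f) • f₀ = 0 := by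
        apply hdense
        intro g
        simp only [map_sub, smul_eval, key f hf g, key f₀ hf₀S g]
        ring
      have : f = ((eval v₀ f₀)⁻¹ * eval v₀ f) • f₀ := by
        have h1 : (eval v₀ f₀) • f = (eval v₀ f) • f₀ := by
          rw [← sub_eq_zero]; exact hzero
        rw [mul_smul, ← h1, ← mul_smul, inv_mul_cancel₀ hval, one_smul]
      rw [this]
      exact Submodule.smul_mem _ _ (Submodule.mem_span_singleton_self f₀)
    calc Module.rank K (Submodule.span K S)
        ≤ Module.rank K (Submodule.span K {f₀}) := by
          apply Submodule.rank_mono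
          rw [Submodule.span_le]
          exact hsub
      _ ≤ 1 := by
          simpa using rank_span_le (R := K) ({f₀} : Set (MvPolynomial (Fin n) K))
  · push_neg at hex
    have : S ⊆ ({0} : Set (MvPolynomial (Fin n) K)) := by
      intro f hf
      simp [hex f hf]
    calc Module.rank K (Submodule.span K S)
        ≤ Module.rank K (Submodule.span K ({0} : Set (MvPolynomial (Fin n) K))) := by
          apply Submodule.rank_mono
          rw [Submodule.span_le]
          exact fun f hf => Submodule.subset_span (this hf)
      _ ≤ 1 := by
          rw [Submodule.span_zero_singleton]
          simp
end

section
/- Let Δ be a cyclic sequence of nonnegative integers p_0, …, p_{u-1} (labels of a polygon). Call a clockwise arc [i,j] admissible if p_i = p_j and p_i < p_k for every interior label p_k of the arc. Then for any two distinct admissible arcs, either their interiors are disjoint or one arc is contained in the interior region of the other (admissible arcs form a laminar/non-crossing family). -/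
private lemma sub_val' {u : ℕ} [NeZero u] (a b : ZMod u) :
    (a - b).val = if b.val ≤ a.val then a.val - b.val else u + a.val - b.val := by
  have ha := ZMod.val_lt a
  have hb := ZMod.val_lt b
  have hd := ZMod.val_lt (a - b)
  have h : ((a - b).val + b.val) % u = a.val := by
    rw [← ZMod.val_add, sub_add_cancel]
  rcases lt_or_ge ((a - b).val + b.val) u with h' | h'
  · rw [Nat.mod_eq_of_lt h'] at h; split_ifs <;> omega
  · rw [Nat.mod_eq_sub_mod h', Nat.mod_eq_of_lt (by omega)] at h; split_ifs <;> omega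

private lemma aux_contain {u : ℕ} [NeZero u] (p : ZMod u → ℕ) (i j i' j' : ZMod u)
    (hadm : p i = p j ∧ ∀ k, (0 < (k - i).val ∧ (k - i).val < (j - i).val) → p i < p k)
    (hadm' : p i' = p j' ∧ ∀ k, (0 < (k - i').val ∧ (k - i').val < (j' - i').val) → p i' < p k)
    (hx : 0 < (i' - i).val ∧ (i' - i).val < (j - i).val) :
    ∀ k, (k - i').val ≤ (j' - i').val → (k - i).val ≤ (j - i).val := by
  set x := (i' - i).val with hxdef
  set a := (j - i).val with hadef
  set x' := (j' - i).val with hx'def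
  set a' := (j' - i').val with ha'def
  have hau : a < u := ZMod.val_lt _
  have hja : (j - i').val = a - x := by
    have := sub_val' (j - i) (i' - i)
    rw [show j - i - (i' - i) = j - i' by ring] at this
    rw [this, if_pos (le_of_lt hx.2)]
  have hsplit : a' = if x ≤ x' then x' - x else u + x' - x := by
    have := sub_val' (j' - i) (i' - i)
    rw [show j' - i - (i' - i) = j' - i' by ring] at this
    rw [ha'def, this]
  -- rule out the crossing/outside cases using admissibility
  by_cases hgood : x ≤ x' ∧ x' ≤ a
  · -- containment
    have ha2 : a' = x' - x := by rw [hsplit, if_pos hgood.1]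
    intro k hk
    have := sub_val' (k - i) (i' - i)
    rw [show k - i - (i' - i) = k - i' by ring] at this
    rw [this] at hk
    split_ifs at hk with h
    · omega
    · omega
  · exfalso
    push_neg at hgood
    have hpj : p i' < p j := by
      apply hadm'.2 j
      constructor
      · omega
      · rw [hja, hsplit]; split_ifs with h <;> omega
    have hpi' : p i < p i' := hadm.2 i' ⟨hx.1, hx.2⟩
    have := hadm.1
    omega

/-- Admissible arcs on a labeled polygon form a non-crossing (laminar) family:
given cyclic labels `p : ZMod u → ℕ`, call `k` interior to the clockwise arc `[i, j]`
if `0 < (k - i).val < (j - i).val`, and `k` a member of `[i, j]` if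
`(k - i).val ≤ (j - i).val`; the arc `[i, j]` is admissible if `p i = p j` and
`p i < p k` for every interior `k`. Then any two distinct admissible arcs either have
disjoint interiors or one is contained in the other. -/
theorem admissible_arcs_laminar (u : ℕ) [NeZero u] (hu : 2 ≤ u) (p : ZMod u → ℕ)
    (Int Arc : ZMod u → ZMod u → ZMod u → Prop)
    (hInt : ∀ i j k, Int i j k ↔ 0 < (k - i).val ∧ (k - i).val < (j - i).val)
    (hArc : ∀ i j k, Arc i j k ↔ (k - i).val ≤ (j - i).val)
    (i j i' j' : ZMod u)
    (hadm : p i = p j ∧ ∀ k, Int i j k → p i < p k)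
    (hadm' : p i' = p j' ∧ ∀ k, Int i' j' k → p i' < p k)
    (hne : (i, j) ≠ (i', j')) :
    (∀ k, ¬(Int i j k ∧ Int i' j' k)) ∨
      (∀ k, Arc i' j' k → Arc i j k) ∨ (∀ k, Arc i j k → Arc i' j' k) := by
  simp only [hInt, hArc] at *
  clear hInt hArc
  by_cases hex : ∃ k, (0 < (k - i).val ∧ (k - i).val < (j - i).val) ∧
      (0 < (k - i').val ∧ (k - i').val < (j' - i').val)
  · right
    obtain ⟨k0, hk0, hk0'⟩ := hex
    by_cases h1 : 0 < (i' - i).val ∧ (i' - i).val < (j - i).val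
    · exact Or.inl (aux_contain p i j i' j' hadm hadm' h1)
    by_cases h2 : 0 < (i - i').val ∧ (i - i').val < (j' - i').val
    · exact Or.inr (aux_contain p i' j' i j hadm' hadm h2)
    -- neither start is strictly inside the other arc
    by_cases h3 : i' = i
    · have he : ∀ k : ZMod u, k - i' = k - i := fun k => by rw [h3]
      rcases le_total ((j' - i').val) ((j - i).val) with h | h
      · refine Or.inl (fun k hk => ?_)
        rw [← he k]; exact le_trans hk h
      · refine Or.inr (fun k hk => ?_)
        rw [he k]; exact le_trans hk h
    · exfalso
      have hx0 : 0 < (i' - i).val := by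
        rcases Nat.eq_zero_or_pos (i' - i).val with h | h
        · exact absurd (sub_eq_zero.mp ((ZMod.val_eq_zero _).mp h)) h3
        · exact h
      have hy : (i - i').val = u - (i' - i).val := by
        have := sub_val' (0 : ZMod u) (i' - i)
        rw [show (0 : ZMod u) - (i' - i) = i - i' by ring] at this
        rw [this, ZMod.val_zero, if_neg (by omega)]
        omega
      have hvlt := ZMod.val_lt (i' - i)
      have hxa : (j - i).val ≤ (i' - i).val := by omega
      have hya : (j' - i').val ≤ (i - i').val := by omega
      have hs : (k0 - i').val = u + (k0 - i).val - (i' - i).val := by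
        have := sub_val' (k0 - i) (i' - i)
        rw [show k0 - i - (i' - i) = k0 - i' by ring] at this
        rw [this, if_neg (by omega)]
      omega
  · left
    push_neg at hex
    intro k ⟨h1, h2⟩
    exact absurd (hex k h1 h2.1) (by omega)
end
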